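/- Let D₁ and D₂ be vertex-disjoint double-rays, and let e₁ = (a,b) ∈ E(D₁), e₂ = (c,d) ∈ E(D₂). Then the graph (D₁ ∪ D₂) − {e₁, e₂} + {(a,c), (b,d)} is a disjoint union of exactly two double-rays covering V(D₁) ∪ V(D₂). -/

import Mathlib

/-!
Deleting `ab` splits `D₁` into two halves, `A ∋ a` and `B ∋ b`. They are disjoint because a
double ray is acyclic: the vertex set of a cycle in a 2-regular graph is closed under adjacency,
so by connectedness it would be the whole, infinite, graph. They are infinite by the handshake
lemma: a finite half would have `a` as its only vertex of odd degree. Likewise `D₂ - cd` splits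
into `C ∋ c` and `D ∋ d`. The new graph is a 2-switch of `D₁ ⊔ D₂`, so it is still 2-regular, and
its components are `A ∪ C`, joined by `ac`, and `B ∪ D`, joined by `bd`.
-/

/-- Every vertex in the support of `H` has exactly two neighbours. -/
def TwoRegularOn {V : Type*} (H : SimpleGraph V) : Prop :=
  ∀ v ∈ H.support, (H.neighborSet v).ncard = 2

/-- Any two vertices in the support of `H` are joined by a path in `H`. -/
def ConnectedOn {V : Type*} (H : SimpleGraph V) : Prop :=
  ∀ u ∈ H.support, ∀ v ∈ H.support, H.Reachable u v

/-- A double-ray: an infinite, connected, 2-regular graph (on its support). -/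
def IsDoubleRayGraph {V : Type*} (H : SimpleGraph V) : Prop :=
  H.support.Infinite ∧ ConnectedOn H ∧ TwoRegularOn H

open SimpleGraph

section

variable {V : Type*}

namespace SimpleGraph

theorem Reachable.mem_of_forall_adj_mem {G : SimpleGraph V} {S : Set V}
    (hS : ∀ ⦃x y : V⦄, G.Adj x y → x ∈ S → y ∈ S) {u v : V} (h : G.Reachable u v)
    (hu : u ∈ S) : v ∈ S := by
  by_contra hv
  obtain ⟨p⟩ := h
  obtain ⟨d, -, hd, hd'⟩ := p.exists_boundary_dart S hu hv
  exact hd' (hS d.adj hd)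

theorem Reachable.mem_support {G : SimpleGraph V} {u v : V} (h : G.Reachable u v)
    (hu : u ∈ G.support) : v ∈ G.support :=
  h.mem_of_forall_adj_mem (fun _ _ hxy _ => hxy.right_mem_support) hu

theorem support_sup (G H : SimpleGraph V) : (G ⊔ H).support = G.support ∪ H.support := by
  ext v
  simp [mem_support, exists_or]

theorem infinite_of_unique_odd_ncard_neighborSet {G : SimpleGraph V} {S : Set V}
    (hS : ∀ v ∈ S, G.neighborSet v ⊆ S) {a : V} (ha : a ∈ S)
    (hodd : Odd (G.neighborSet a).ncard)
    (heven : ∀ v ∈ S, v ≠ a → Even (G.neighborSet v).ncard) : S.Infinite := by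
  intro hfin
  have := hfin.fintype
  classical
  have hdegree (v : S) : (G.induce S).degree v = (G.neighborSet v).ncard := by
    rw [← card_neighborSet_eq_degree, ← Nat.card_eq_fintype_card, neighborSet_induce,
      Nat.card_coe_set_eq, Set.ncard_preimage_of_injective_subset_range Subtype.val_injective]
    simpa using hS v v.2
  obtain ⟨w, hwa, hw⟩ :=
    (G.induce S).exists_ne_odd_degree_of_exists_odd_degree ⟨a, ha⟩ (by rwa [hdegree])
  rw [hdegree] at hw
  exact Nat.not_even_iff_odd.mpr hw (heven w w.2 fun h => hwa (Subtype.ext h))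

end SimpleGraph

theorem TwoRegularOn.mem_support_of_isCycle {H : SimpleGraph V} (hH : TwoRegularOn H)
    {u x y : V} {q : H.Walk u u} (hq : q.IsCycle) (hx : x ∈ q.support) (hxy : H.Adj x y) :
    y ∈ q.support := by
  have hcard := hH x hxy.left_mem_support
  -- The cycle already provides two neighbours of `x`, so these are all of them.
  have hnbr : q.toSubgraph.neighborSet x = H.neighborSet x :=
    Set.eq_of_subset_of_ncard_le (q.toSubgraph.neighborSet_subset x)
      (by rw [hcard, hq.ncard_neighborSet_toSubgraph_eq_two hx])
      (Set.finite_of_ncard_ne_zero (by rw [hcard]; decide))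
  have hadj : q.toSubgraph.Adj x y := by
    rw [← Subgraph.mem_neighborSet, hnbr]
    exact hxy
  exact q.mem_verts_toSubgraph.mp (q.toSubgraph.edge_vert hadj.symm)

theorem IsDoubleRayGraph.isAcyclic {H : SimpleGraph V} (hH : IsDoubleRayGraph H) :
    H.IsAcyclic := by
  obtain ⟨hinf, hconn, hreg⟩ := hH
  intro u q hq
  have hu : u ∈ H.support := (q.adj_snd hq.not_nil).left_mem_support
  refine hinf (q.support.finite_toSet.subset fun v hv => ?_)
  exact (hconn u hu v hv).mem_of_forall_adj_mem
    (fun _ _ hxy hx => hreg.mem_support_of_isCycle hq hx hxy) q.start_mem_support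

theorem IsDoubleRayGraph.not_reachable_deleteEdges {H : SimpleGraph V}
    (hH : IsDoubleRayGraph H) {a b : V} (hab : H.Adj a b) :
    ¬(H.deleteEdges {s(a, b)}).Reachable a b :=
  isBridge_iff.mp (isAcyclic_iff_forall_adj_isBridge.mp hH.isAcyclic hab)

theorem ConnectedOn.reachable_deleteEdges_or {D : SimpleGraph V} (hD : ConnectedOn D)
    {a b v : V} (hab : D.Adj a b) (hv : v ∈ D.support) :
    (D.deleteEdges {s(a, b)}).Reachable a v ∨ (D.deleteEdges {s(a, b)}).Reachable b v := by
  refine (hD a hab.left_mem_support v hv).mem_of_forall_adj_mem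
    (S := {v | (D.deleteEdges {s(a, b)}).Reachable a v ∨
      (D.deleteEdges {s(a, b)}).Reachable b v}) (fun x y hxy hx => ?_) (Or.inl .rfl)
  by_cases he : s(x, y) = s(a, b)
  · rcases Sym2.eq_iff.mp he with ⟨-, rfl⟩ | ⟨-, rfl⟩
    · exact Or.inr .rfl
    · exact Or.inl .rfl
  · have hK : (D.deleteEdges {s(a, b)}).Adj x y := deleteEdges_adj.mpr ⟨hxy, he⟩
    exact hx.imp (·.trans hK.reachable) (·.trans hK.reachable)

theorem IsDoubleRayGraph.infinite_reachable_deleteEdges {H : SimpleGraph V}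
    (hH : IsDoubleRayGraph H) {a b : V} (hab : H.Adj a b) :
    {v | (H.deleteEdges {s(a, b)}).Reachable a v}.Infinite := by
  have hreg := hH.2.2
  refine infinite_of_unique_odd_ncard_neighborSet (G := H.deleteEdges {s(a, b)})
    (fun v hv w hw => hv.trans (Adj.reachable hw)) Reachable.rfl ?_ ?_
  · have hnbr : (H.deleteEdges {s(a, b)}).neighborSet a = H.neighborSet a \ {b} := by
      ext w
      simp [hab.ne]
    rw [hnbr, Set.ncard_sdiff_singleton_of_mem (show b ∈ H.neighborSet a from hab),
      hreg a hab.left_mem_support]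
    decide
  · intro v hv hva
    have hvb : v ≠ b := fun h => hH.not_reachable_deleteEdges hab (h ▸ hv)
    have hnbr : (H.deleteEdges {s(a, b)}).neighborSet v = H.neighborSet v := by
      ext w
      simp [hva, hvb]
    rw [hnbr, hreg v ((hv.mono (deleteEdges_le _)).mem_support hab.left_mem_support)]
    exact even_two

namespace SimpleGraph

/-- The connected component of `a` in `G`, as a graph on all of `V`. -/
def componentOf (G : SimpleGraph V) (a : V) : SimpleGraph V where
  Adj x y := G.Adj x y ∧ G.Reachable a x
  symm := ⟨fun _ _ h => ⟨h.1.symm, h.2.trans h.1.reachable⟩⟩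
  loopless := ⟨fun x h => G.loopless.irrefl x h.1⟩

variable {G : SimpleGraph V} {a b : V}

@[simp]
theorem componentOf_adj {x y : V} : (G.componentOf a).Adj x y ↔ G.Adj x y ∧ G.Reachable a x :=
  Iff.rfl

theorem componentOf_le (G : SimpleGraph V) (a : V) : G.componentOf a ≤ G := fun _ _ h => h.1

theorem mem_support_componentOf {v : V} :
    v ∈ (G.componentOf a).support ↔ v ∈ G.support ∧ G.Reachable a v := by
  simp only [mem_support, componentOf_adj]
  exact ⟨fun ⟨w, hw, hr⟩ => ⟨⟨w, hw⟩, hr⟩, fun ⟨⟨w, hw⟩, hr⟩ => ⟨w, hw, hr⟩⟩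

theorem Reachable.componentOf {v : V} (h : G.Reachable a v) : (G.componentOf a).Reachable a v :=
  h.mem_of_forall_adj_mem (S := {v | (G.componentOf a).Reachable a v})
    (fun _ _ hxy hx => hx.trans (Adj.reachable ⟨hxy, hx.mono (G.componentOf_le a)⟩)) .rfl

theorem connectedOn_componentOf (G : SimpleGraph V) (a : V) : ConnectedOn (G.componentOf a) := by
  intro u hu v hv
  rw [mem_support_componentOf] at hu hv
  exact hu.2.componentOf.symm.trans hv.2.componentOf

theorem componentOf_sup_componentOf
    (h : ∀ v ∈ G.support, G.Reachable a v ∨ G.Reachable b v) :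
    G.componentOf a ⊔ G.componentOf b = G := by
  ext x y
  simp only [sup_adj, componentOf_adj, ← and_or_left, and_iff_left_iff_imp]
  exact fun hxy => h x hxy.left_mem_support

theorem disjoint_support_componentOf (hab : ¬G.Reachable a b) :
    Disjoint (G.componentOf a).support (G.componentOf b).support := by
  rw [Set.disjoint_left]
  intro v ha hb
  rw [mem_support_componentOf] at ha hb
  exact hab (ha.2.trans hb.2.symm)

theorem infinite_support_componentOf {K : SimpleGraph V} (hKG : K ≤ G) (ha : a ∈ G.support)
    (h : {v | K.Reachable a v}.Infinite) : (G.componentOf a).support.Infinite :=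
  h.mono fun _ hv =>
    have hv : G.Reachable a _ := Reachable.mono hKG hv
    mem_support_componentOf.mpr ⟨hv.mem_support ha, hv⟩

end SimpleGraph

theorem TwoRegularOn.componentOf {G : SimpleGraph V} (hG : TwoRegularOn G) (a : V) :
    TwoRegularOn (G.componentOf a) := by
  intro v hv
  rw [mem_support_componentOf] at hv
  have hnbr : (G.componentOf a).neighborSet v = G.neighborSet v := by
    ext w
    simp [hv.2]
  rw [hnbr]
  exact hG v hv.1

namespace SimpleGraph

def twoSwitch (H : SimpleGraph V) (a b c d : V) : SimpleGraph V :=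
  H.deleteEdges {s(a, b), s(c, d)} ⊔ fromEdgeSet {s(a, c), s(b, d)}

variable {H : SimpleGraph V} {a b c d : V}

theorem twoSwitch_swap (H : SimpleGraph V) (a b c d : V) :
    H.twoSwitch b a d c = H.twoSwitch a b c d := by
  rw [twoSwitch, twoSwitch, Sym2.eq_swap (a := b) (b := a), Sym2.eq_swap (a := d) (b := c),
    Set.pair_comm (s(b, d))]

theorem twoSwitch_comm (H : SimpleGraph V) (a b c d : V) :
    H.twoSwitch c d a b = H.twoSwitch a b c d := by
  rw [twoSwitch, twoSwitch, Sym2.eq_swap (a := c) (b := a), Sym2.eq_swap (a := d) (b := b),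
    Set.pair_comm (s(c, d))]

theorem neighborSet_twoSwitch_of_ne {v : V} (hva : v ≠ a) (hvb : v ≠ b) (hvc : v ≠ c)
    (hvd : v ≠ d) : (H.twoSwitch a b c d).neighborSet v = H.neighborSet v := by
  ext w
  simp [twoSwitch, hva, hvb, hvc, hvd]

theorem neighborSet_twoSwitch_left (hab : a ≠ b) (hac : a ≠ c) (had : a ≠ d) :
    (H.twoSwitch a b c d).neighborSet a = insert c (H.neighborSet a \ {b}) := by
  ext w
  rcases eq_or_ne w c with rfl | hwc <;> simp [twoSwitch, *]

theorem ncard_neighborSet_twoSwitch_left (hab : H.Adj a b) (hac : ¬H.Adj a c) (hac' : a ≠ c)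
    (had : a ≠ d) (hfin : (H.neighborSet a).Finite) :
    ((H.twoSwitch a b c d).neighborSet a).ncard = (H.neighborSet a).ncard := by
  rw [neighborSet_twoSwitch_left hab.ne hac' had,
    Set.ncard_insert_of_notMem (fun h => hac h.1) hfin.sdiff,
    Set.ncard_sdiff_singleton_of_mem (show b ∈ H.neighborSet a from hab)]
  exact Nat.sub_add_cancel ((Set.ncard_pos hfin).mpr ⟨b, hab⟩)

theorem ncard_neighborSet_twoSwitch (hab : H.Adj a b) (hcd : H.Adj c d) (hac : ¬H.Adj a c)
    (hbd : ¬H.Adj b d) (hac' : a ≠ c) (had : a ≠ d) (hbc : b ≠ c) (hbd' : b ≠ d) {v : V} (hfin : (H.neighborSet v).Finite) :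
    ((H.twoSwitch a b c d).neighborSet v).ncard = (H.neighborSet v).ncard := by
  by_cases hva : v = a
  · subst hva
    exact ncard_neighborSet_twoSwitch_left hab hac hac' had hfin
  by_cases hvb : v = b
  · subst hvb
    rw [← twoSwitch_swap]
    exact ncard_neighborSet_twoSwitch_left hab.symm hbd hbd' hbc hfin
  by_cases hvc : v = c
  · subst hvc
    rw [← twoSwitch_comm]
    exact ncard_neighborSet_twoSwitch_left hcd (hac ∘ .symm) hac'.symm hbc.symm hfin
  by_cases hvd : v = d
  · subst hvd
    rw [← twoSwitch_comm, ← twoSwitch_swap]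
    exact ncard_neighborSet_twoSwitch_left hcd.symm (hbd ∘ .symm) hbd'.symm had.symm hfin
  rw [neighborSet_twoSwitch_of_ne hva hvb hvc hvd]

theorem support_twoSwitch (hab : H.Adj a b) (hcd : H.Adj c d) (hac' : a ≠ c) (hbd' : b ≠ d) :
    (H.twoSwitch a b c d).support = H.support := by
  ext v
  by_cases hv : v = a ∨ v = b ∨ v = c ∨ v = d
  · have hac : (H.twoSwitch a b c d).Adj a c := by simp [twoSwitch, hac']
    have hbd : (H.twoSwitch a b c d).Adj b d := by simp [twoSwitch, hbd']
    rcases hv with rfl | rfl | rfl | rfl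
    · exact iff_of_true hac.left_mem_support hab.left_mem_support
    · exact iff_of_true hbd.left_mem_support hab.right_mem_support
    · exact iff_of_true hac.right_mem_support hcd.left_mem_support
    · exact iff_of_true hbd.right_mem_support hcd.right_mem_support
  · obtain ⟨hva, hvb, hvc, hvd⟩ : v ≠ a ∧ v ≠ b ∧ v ≠ c ∧ v ≠ d := by tauto
    simp only [mem_support, ← mem_neighborSet, neighborSet_twoSwitch_of_ne hva hvb hvc hvd]

end SimpleGraph

theorem TwoRegularOn.twoSwitch {H : SimpleGraph V} (hH : TwoRegularOn H) {a b c d : V}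
    (hab : H.Adj a b) (hcd : H.Adj c d) (hac : ¬H.Adj a c) (hbd : ¬H.Adj b d) (hac' : a ≠ c)
    (had : a ≠ d) (hbc : b ≠ c) (hbd' : b ≠ d) : TwoRegularOn (H.twoSwitch a b c d) := by
  intro v hv
  rw [support_twoSwitch hab hcd hac' hbd'] at hv
  rw [ncard_neighborSet_twoSwitch hab hcd hac hbd hac' had hbc hbd'
    (Set.finite_of_ncard_ne_zero (by rw [hH v hv]; decide)), hH v hv]

section DisjointDoubleRays

variable {D₁ D₂ : SimpleGraph V} {a b c d : V}

theorem TwoRegularOn.sup_of_disjoint_support (h₁ : TwoRegularOn D₁) (h₂ : TwoRegularOn D₂)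
    (hdisj : Disjoint D₁.support D₂.support) : TwoRegularOn (D₁ ⊔ D₂) := by
  intro v hv
  rw [support_sup] at hv
  rw [neighborSet_sup]
  rcases hv with hv | hv
  · have hempty : D₂.neighborSet v = ∅ := Set.eq_empty_of_forall_notMem
      fun w hw => Set.disjoint_left.mp hdisj hv (show D₂.Adj v w from hw).left_mem_support
    rw [hempty, Set.union_empty, h₁ v hv]
  · have hempty : D₁.neighborSet v = ∅ := Set.eq_empty_of_forall_notMem
      fun w hw => Set.disjoint_right.mp hdisj hv (show D₁.Adj v w from hw).left_mem_support
    rw [hempty, Set.empty_union, h₂ v hv]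

theorem not_adj_sup_of_disjoint_support (hdisj : Disjoint D₁.support D₂.support) {x y : V}
    (hx : x ∈ D₁.support) (hy : y ∈ D₂.support) : ¬(D₁ ⊔ D₂).Adj x y := by
  rintro (h | h)
  · exact Set.disjoint_left.mp hdisj h.right_mem_support hy
  · exact Set.disjoint_left.mp hdisj hx h.left_mem_support

theorem twoSwitch_sup_eq (hdisj : Disjoint D₁.support D₂.support) (ha : a ∈ D₁.support)
    (hc : c ∈ D₂.support) :
    (D₁ ⊔ D₂).twoSwitch a b c d =
      D₁.deleteEdges {s(a, b)} ⊔ D₂.deleteEdges {s(c, d)} ⊔ fromEdgeSet {s(a, c), s(b, d)} := by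
  have h₁ : D₁.deleteEdges {s(a, b), s(c, d)} = D₁.deleteEdges {s(a, b)} := by
    rw [Set.insert_eq, ← deleteEdges_deleteEdges, deleteEdges_eq_self.mpr]
    exact Set.disjoint_singleton_right.mpr fun h =>
      Set.disjoint_left.mp hdisj (deleteEdges_le _ ((mem_edgeSet _).mp h)).left_mem_support hc
  have h₂ : D₂.deleteEdges {s(a, b), s(c, d)} = D₂.deleteEdges {s(c, d)} := by
    rw [Set.pair_comm, Set.insert_eq, ← deleteEdges_deleteEdges, deleteEdges_eq_self.mpr]
    exact Set.disjoint_singleton_right.mpr fun h =>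
      Set.disjoint_left.mp hdisj ha (deleteEdges_le _ ((mem_edgeSet _).mp h)).left_mem_support
  rw [twoSwitch, deleteEdges_sup, h₁, h₂]

theorem reachable_twoSwitch_sup_or (hD₁ : ConnectedOn D₁) (hD₂ : ConnectedOn D₂)
    (hdisj : Disjoint D₁.support D₂.support) (he₁ : D₁.Adj a b) (he₂ : D₂.Adj c d) {v : V}
    (hv : v ∈ D₁.support ∪ D₂.support) :
    ((D₁ ⊔ D₂).twoSwitch a b c d).Reachable a v ∨ ((D₁ ⊔ D₂).twoSwitch a b c d).Reachable b v := by
  rw [twoSwitch_sup_eq hdisj he₁.left_mem_support he₂.left_mem_support]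
  have hac : (fromEdgeSet {s(a, c), s(b, d)}).Adj a c := by
    simp [hdisj.ne_of_mem he₁.left_mem_support he₂.left_mem_support]
  have hbd : (fromEdgeSet {s(a, c), s(b, d)}).Adj b d := by
    simp [hdisj.ne_of_mem he₁.right_mem_support he₂.right_mem_support]
  rcases hv with hv | hv
  · exact (hD₁.reachable_deleteEdges_or he₁ hv).imp
      (·.mono (le_sup_left.trans le_sup_left)) (·.mono (le_sup_left.trans le_sup_left))
  · exact (hD₂.reachable_deleteEdges_or he₂ hv).imp
      (fun h => (hac.reachable.mono le_sup_right).trans (h.mono (le_sup_right.trans le_sup_left)))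
      (fun h => (hbd.reachable.mono le_sup_right).trans (h.mono (le_sup_right.trans le_sup_left)))

theorem not_reachable_twoSwitch_sup (hD₁ : IsDoubleRayGraph D₁) (hD₂ : IsDoubleRayGraph D₂)
    (hdisj : Disjoint D₁.support D₂.support) (he₁ : D₁.Adj a b) (he₂ : D₂.Adj c d) :
    ¬((D₁ ⊔ D₂).twoSwitch a b c d).Reachable a b := by
  set K₁ := D₁.deleteEdges {s(a, b)}
  set K₂ := D₂.deleteEdges {s(c, d)}
  have hK₁ (v : V) (h : K₁.Reachable a v) : v ∈ D₁.support :=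
    (h.mono (deleteEdges_le _)).mem_support he₁.left_mem_support
  have hK₂ (v : V) (h : K₂.Reachable c v) : v ∈ D₂.support :=
    (h.mono (deleteEdges_le _)).mem_support he₂.left_mem_support
  -- The half of `D₁` at `a` together with the half of `D₂` at `c` is closed in the new graph:
  -- the only new edge that could leave it is `bd`, and neither `b` nor `d` lies in it.
  set S := {v | K₁.Reachable a v ∨ K₂.Reachable c v}
  have hS₁ {x : V} (hx : x ∈ S) (hx₁ : x ∈ D₁.support) : K₁.Reachable a x :=
    hx.resolve_right fun h => Set.disjoint_left.mp hdisj hx₁ (hK₂ x h)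
  have hS₂ {x : V} (hx : x ∈ S) (hx₂ : x ∈ D₂.support) : K₂.Reachable c x :=
    hx.resolve_left fun h => Set.disjoint_left.mp hdisj (hK₁ x h) hx₂
  have hb : b ∉ S := fun hb => hD₁.not_reachable_deleteEdges he₁ (hS₁ hb he₁.right_mem_support)
  have hd : d ∉ S := fun hd => hD₂.not_reachable_deleteEdges he₂ (hS₂ hd he₂.right_mem_support)
  intro h
  refine hb (h.mem_of_forall_adj_mem ?_ (Or.inl .rfl))
  rw [twoSwitch_sup_eq hdisj he₁.left_mem_support he₂.left_mem_support]
  rintro x y ((hxy | hxy) | hxy) hx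
  · exact .inl ((hS₁ hx (support_mono (deleteEdges_le _) hxy.left_mem_support)).trans
      hxy.reachable)
  · exact .inr ((hS₂ hx (support_mono (deleteEdges_le _) hxy.left_mem_support)).trans
      hxy.reachable)
  · simp only [fromEdgeSet_adj, Set.mem_insert_iff, Set.mem_singleton_iff, Sym2.eq_iff] at hxy
    rcases hxy.1 with (⟨-, hy⟩ | ⟨-, hy⟩) | (⟨hx', -⟩ | ⟨hx', -⟩)
    · exact .inr (hy ▸ .rfl)
    · exact .inl (hy ▸ .rfl)
    · exact absurd (hx' ▸ hx) hb
    · exact absurd (hx' ▸ hx) hd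

end DisjointDoubleRays

end

theorem stmt_11 {V : Type*} (D₁ D₂ : SimpleGraph V)
    (hdisj : Disjoint D₁.support D₂.support)
    (hD₁ : IsDoubleRayGraph D₁) (hD₂ : IsDoubleRayGraph D₂)
    (a b c d : V) (he₁ : D₁.Adj a b) (he₂ : D₂.Adj c d) :
    ∀ G' : SimpleGraph V,
      G' = ((D₁ ⊔ D₂).deleteEdges {s(a, b), s(c, d)}) ⊔
            SimpleGraph.fromEdgeSet {s(a, c), s(b, d)} →
      ∃ E₁ E₂ : SimpleGraph V,
        E₁ ⊔ E₂ = G' ∧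
        Disjoint E₁.support E₂.support ∧
        IsDoubleRayGraph E₁ ∧ IsDoubleRayGraph E₂ ∧
        E₁.support ∪ E₂.support = D₁.support ∪ D₂.support := by
  rintro _ rfl
  have ha := he₁.left_mem_support
  have hb := he₁.right_mem_support
  have hc := he₂.left_mem_support
  have hd := he₂.right_mem_support
  have hab : (D₁ ⊔ D₂).Adj a b := .inl he₁
  have hcd : (D₁ ⊔ D₂).Adj c d := .inr he₂
  have hsupp : ((D₁ ⊔ D₂).twoSwitch a b c d).support = D₁.support ∪ D₂.support := by
    rw [support_twoSwitch hab hcd (hdisj.ne_of_mem ha hc) (hdisj.ne_of_mem hb hd),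
      support_sup]
  have hreg := (hD₁.2.2.sup_of_disjoint_support hD₂.2.2 hdisj).twoSwitch hab hcd
    (not_adj_sup_of_disjoint_support hdisj ha hc) (not_adj_sup_of_disjoint_support hdisj hb hd)
    (hdisj.ne_of_mem ha hc) (hdisj.ne_of_mem ha hd) (hdisj.ne_of_mem hb hc)
    (hdisj.ne_of_mem hb hd)
  have hsplit := componentOf_sup_componentOf fun v hv =>
    reachable_twoSwitch_sup_or hD₁.2.1 hD₂.2.1 hdisj he₁ he₂ (hsupp ▸ hv)
  have hK₁ : D₁.deleteEdges {s(a, b)} ≤ (D₁ ⊔ D₂).twoSwitch a b c d := by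
    rw [twoSwitch_sup_eq hdisj ha hc]
    exact le_sup_left.trans le_sup_left
  refine ⟨_, _, hsplit,
    disjoint_support_componentOf (not_reachable_twoSwitch_sup hD₁ hD₂ hdisj he₁ he₂),
    ⟨?_, connectedOn_componentOf _ _, hreg.componentOf _⟩,
    ⟨?_, connectedOn_componentOf _ _, hreg.componentOf _⟩,
    by rw [← support_sup, hsplit, hsupp]⟩
  · exact infinite_support_componentOf hK₁ (hsupp ▸ .inl ha)
      (hD₁.infinite_reachable_deleteEdges he₁)
  · exact infinite_support_componentOf (Sym2.eq_swap (a := a) ▸ hK₁) (hsupp ▸ .inl hb)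
      (hD₁.infinite_reachable_deleteEdges he₁.symm)
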